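/- arXiv:1107.5928 — 4 statements merged into one kernel-verified Lean document; each statement's English description precedes it below -/
import Mathlib

section
/- Nyquist criterion for H∞: Let ρ ∈ (0,1) and let f ∈ H∞ be such that its restriction to the annulus A_ρ is invertible in C_b(A_ρ) (equivalently, inf_{ρ<|z|<1} |f(z)| > 0). Then f is invertible in H∞ (i.e., there exists g ∈ H∞ with fg = 1 on 𝔻) if and only if W(ι(f)) = 0, i.e., if and only if for some (equivalently, every) r ∈ (ρ,1) the loop ζ ↦ f(rζ) on 𝕋 has winding number 0 about the origin. -/
open Real

/-- The open annulus `{z : ℂ | ρ < |z| < 1}`. -/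
def annulus (ρ : ℝ) : Set ℂ := {z : ℂ | ρ < ‖z‖ ∧ ‖z‖ < 1}

/-- `F` is invertible in `C_b(A_ρ)`: it is continuous and bounded on the annulus,
and `inf_{z ∈ A_ρ} |F z| > 0`. -/
def InvCb (ρ : ℝ) (F : ℂ → ℂ) : Prop :=
  ContinuousOn F (annulus ρ) ∧
  (∃ M : ℝ, ∀ z ∈ annulus ρ, ‖F z‖ ≤ M) ∧
  (∃ m > (0 : ℝ), ∀ z ∈ annulus ρ, m ≤ ‖F z‖)

/-- `WindingNumberIs f n` says the loop `ζ ↦ f ζ` on the unit circle has winding number `n`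
about the origin: there is a continuous argument function `θ : [0, 2π] → ℝ` with
`f (e^{it}) = |f (e^{it})| e^{iθ(t)}` and `θ(2π) − θ(0) = 2πn`. -/
def WindingNumberIs (f : ℂ → ℂ) (n : ℤ) : Prop :=
  ∃ θ : ℝ → ℝ, ContinuousOn θ (Set.Icc 0 (2 * π)) ∧
    (∀ t ∈ Set.Icc (0 : ℝ) (2 * π),
      f (Complex.exp (Complex.I * t)) =
        (‖f (Complex.exp (Complex.I * t))‖ : ℂ) * Complex.exp (Complex.I * θ t)) ∧
    θ (2 * π) - θ 0 = 2 * π * n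

/-!
If `f` has an inverse in `H^∞` it has no zeros, so it has a continuous logarithm `L` on the
(simply connected) disk, and `t ↦ Im L(r e^{it})` is an argument of the loop that returns to its
initial value: the winding number is `0`.

Conversely, all zeros of `f` lie in `|z| ≤ ρ`. Dividing them out writes
`f = ∏ (z - u)^{n_u} · g` with `g` zero-free on a disk containing the circle `|z| = r`, so the
winding number is `∑ n_u` and vanishes only if `f` has no zeros. Then `|f|` is bounded below on
`|z| ≤ ρ` by compactness and on the annulus by hypothesis, so `1 / f ∈ H^∞`.
-/

open Metric Complex

theorem exp_I_mul_ofReal_mem_sphere (t : ℝ) : cexp (I * t) ∈ sphere (0 : ℂ) 1 := by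
  simp [mul_comm I]

namespace WindingNumberIs

variable {F G : ℂ → ℂ} {n m : ℤ}

theorem congr (hF : WindingNumberIs F n) (h : ∀ ζ ∈ sphere (0 : ℂ) 1, F ζ = G ζ) :
    WindingNumberIs G n := by
  obtain ⟨θ, hθ, hF, hn⟩ := hF
  refine ⟨θ, hθ, fun t ht => ?_, hn⟩
  simpa only [h _ (exp_I_mul_ofReal_mem_sphere t)] using hF t ht

theorem mul (hF : WindingNumberIs F n) (hG : WindingNumberIs G m) :
    WindingNumberIs (fun ζ => F ζ * G ζ) (n + m) := by
  obtain ⟨θ, hθ, hF, hn⟩ := hF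
  obtain ⟨φ, hφ, hG, hm⟩ := hG
  refine ⟨θ + φ, hθ.add hφ, fun t ht => ?_, ?_⟩
  · dsimp only
    rw [norm_mul, Pi.add_apply, ofReal_mul, ofReal_add, mul_add, Complex.exp_add]
    conv_lhs => rw [hF t ht, hG t ht]
    ring
  · simp only [Pi.add_apply, Int.cast_add]
    linarith

theorem const_one : WindingNumberIs (fun _ => 1) 0 :=
  ⟨0, continuousOn_const, fun t _ => by simp, by simp⟩

theorem pow (hF : WindingNumberIs F n) (k : ℕ) :
    WindingNumberIs (fun ζ => F ζ ^ k) (k * n) := by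
  induction k with
  | zero => simpa using const_one
  | succ k ih => simpa [pow_succ, add_mul] using ih.mul hF

theorem finset_prod {ι : Type*} {s : Finset ι} {f : ι → ℂ → ℂ} {k : ι → ℤ}
    (h : ∀ i ∈ s, WindingNumberIs (f i) (k i)) :
    WindingNumberIs (fun ζ => ∏ i ∈ s, f i ζ) (∑ i ∈ s, k i) := by
  classical
  induction s using Finset.induction_on with
  | empty => simpa using const_one
  | insert i s hi ih =>
    simp only [Finset.prod_insert hi, Finset.sum_insert hi]
    exact (h i (s.mem_insert_self i)).mul (ih fun j hj => h j (Finset.mem_insert_of_mem hj))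

theorem unique (hF : ∀ ζ ∈ sphere (0 : ℂ) 1, F ζ ≠ 0) (hn : WindingNumberIs F n)
    (hm : WindingNumberIs F m) : n = m := by
  obtain ⟨θ, hθ, hFθ, hn⟩ := hn
  obtain ⟨φ, hφ, hFφ, hm⟩ := hm
  have hdiff : Set.MapsTo (θ - φ) (Set.Icc 0 (2 * π)) (AddSubgroup.zmultiples (2 * π)) := by
    intro t ht
    have hne : (‖F (exp (I * t))‖ : ℂ) ≠ 0 := by simpa using hF _ (exp_I_mul_ofReal_mem_sphere t)
    obtain ⟨k, hk⟩ := exp_eq_exp_iff_exists_int.mp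
      (mul_left_cancel₀ hne ((hFθ t ht).symm.trans (hFφ t ht)))
    have him : θ t = φ t + k * (2 * π) := by simpa using congrArg im hk
    refine AddSubgroup.mem_zmultiples_iff.mpr ⟨k, ?_⟩
    simp only [zsmul_eq_mul, Pi.sub_apply]
    linarith
  have hconst := isPreconnected_Icc.constant_of_mapsTo
    (isDiscrete_iff_discreteTopology.mpr
      (inferInstanceAs (DiscreteTopology (AddSubgroup.zmultiples (2 * π))))) (hθ.sub hφ) hdiff
    (Set.left_mem_Icc.mpr two_pi_pos.le) (Set.right_mem_Icc.mpr two_pi_pos.le)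
  have : (2 * π) * (n : ℝ) = (2 * π) * m := by
    simp only [Pi.sub_apply] at hconst
    linarith
  exact_mod_cast mul_left_cancel₀ two_pi_pos.ne' this

end WindingNumberIs

theorem windingNumberIs_zero_of_eqOn_exp {F L : ℂ → ℂ} (hL : ContinuousOn L (sphere 0 1))
    (hF : ∀ ζ ∈ sphere (0 : ℂ) 1, F ζ = cexp (L ζ)) : WindingNumberIs F 0 := by
  have hcirc : Continuous fun t : ℝ => cexp (I * t) := by fun_prop
  refine ⟨fun t => (L (cexp (I * t))).im,
    (continuous_im.comp (hL.comp_continuous hcirc exp_I_mul_ofReal_mem_sphere)).continuousOn,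
    fun t _ => ?_, ?_⟩
  · rw [hF _ (exp_I_mul_ofReal_mem_sphere t), norm_exp, ofReal_exp, ← Complex.exp_add]
    congr 1
    apply Complex.ext <;> simp
  · have hperiod : cexp (I * (2 * π : ℝ)) = cexp (I * (0 : ℝ)) := by
      rw [ofReal_zero, mul_zero, Complex.exp_zero, mul_comm]; push_cast; exact exp_two_pi_mul_I
    simp only [hperiod, sub_self, Int.cast_zero, mul_zero]

theorem windingNumberIs_ofReal_mul {r : ℝ} (hr : 0 < r) : WindingNumberIs (fun ζ => r * ζ) 1 := by
  refine ⟨id, continuousOn_id, fun t _ => ?_, by simp⟩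
  simp [norm_exp, abs_of_pos hr, mul_comm I]

theorem windingNumberIs_ofReal_mul_sub {r : ℝ} (hr : 0 < r) {a : ℂ} (ha : ‖a‖ < r) :
    WindingNumberIs (fun ζ => r * ζ - a) 1 := by
  -- `r ζ - a = r ζ (1 - a / (r ζ))`, and the second factor stays in the right half-plane.
  set q : ℂ → ℂ := fun ζ => 1 - a / (r * ζ)
  have hrζ : ∀ ζ ∈ sphere (0 : ℂ) 1, (r : ℂ) * ζ ≠ 0 := fun ζ hζ =>
    mul_ne_zero (ofReal_ne_zero.mpr hr.ne') (ne_zero_of_mem_sphere one_ne_zero ⟨ζ, hζ⟩)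
  have hq : ∀ ζ ∈ sphere (0 : ℂ) 1, q ζ ∈ slitPlane := by
    intro ζ hζ
    have hζ : ‖ζ‖ = 1 := by simpa using hζ
    have : ‖a / (r * ζ)‖ < 1 := by
      rwa [norm_div, norm_mul, hζ, norm_real, Real.norm_of_nonneg hr.le, mul_one, div_lt_one hr]
    refine mem_slitPlane_iff.mpr (Or.inl ?_)
    simp only [q, sub_re, one_re]
    linarith [re_le_norm (a / (r * ζ))]
  have hqc : ContinuousOn q (sphere 0 1) :=
    continuousOn_const.sub (continuousOn_const.div (by fun_prop) hrζ)
  have hq0 : WindingNumberIs q 0 := windingNumberIs_zero_of_eqOn_exp (hqc.clog hq)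
    fun ζ hζ => (Complex.exp_log (slitPlane_ne_zero (hq ζ hζ))).symm
  refine ((windingNumberIs_ofReal_mul hr).mul hq0).congr fun ζ hζ => ?_
  simp only [q, mul_sub, mul_one, mul_div_cancel₀ _ (hrζ ζ hζ)]

theorem isSimplyConnected_ball {E : Type*} [NormedAddCommGroup E] [NormedSpace ℝ E] (x : E)
    {R : ℝ} (hR : 0 < R) : IsSimplyConnected (ball x R) :=
  haveI := (convex_ball x R).contractibleSpace ⟨x, mem_ball_self hR⟩
  inferInstanceAs (SimplyConnectedSpace (ball x R))

theorem windingNumberIs_zero_of_ne_zero_on_ball {g : ℂ → ℂ} {R r : ℝ}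
    (hg : ContinuousOn g (ball 0 R)) (hg0 : ∀ z ∈ ball (0 : ℂ) R, g z ≠ 0) (hr : |r| < R) :
    WindingNumberIs (fun ζ => g (r * ζ)) 0 := by
  have hmaps : Set.MapsTo (fun ζ : ℂ => r * ζ) (sphere 0 1) (ball 0 R) := fun ζ hζ => by
    simpa [norm_mul, mem_sphere_zero_iff_norm.mp hζ] using hr
  obtain ⟨L, hL, hexp⟩ := exists_continuousOn_eqOn_exp_comp
    (isSimplyConnected_ball 0 ((abs_nonneg r).trans_lt hr)) isOpen_ball hg
    fun ⟨z, hz, hgz⟩ => hg0 z hz hgz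
  exact windingNumberIs_zero_of_eqOn_exp (hL.comp (by fun_prop) hmaps)
    fun ζ hζ => (hexp (hmaps hζ)).symm

theorem exists_eq_prod_sub_pow_mul {f : ℂ → ℂ} {R : ℝ} (hf : AnalyticOnNhd ℂ f (closedBall 0 R))
    (hf0 : ∃ z ∈ ball (0 : ℂ) R, f z ≠ 0) :
    ∃ (S : Finset ℂ) (n : ℂ → ℕ) (g : ℂ → ℂ), (∀ u ∈ S, u ∈ ball (0 : ℂ) R ∧ f u = 0) ∧
      AnalyticOnNhd ℂ g (ball 0 R) ∧ (∀ z ∈ ball (0 : ℂ) R, g z ≠ 0) ∧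
      ∀ z ∈ ball (0 : ℂ) R, f z = (∏ u ∈ S, (z - u) ^ n u) * g z := by
  have hU : AnalyticOnNhd ℂ f (ball 0 R) := hf.mono ball_subset_closedBall
  set D := MeromorphicOn.divisor f (ball 0 R)
  have hfin : D.support.Finite := MeromorphicOn.divisor_ball_support_finite hf.meromorphicOn
  have hD : 0 ≤ D := MeromorphicOn.AnalyticOnNhd.divisor_nonneg hU
  obtain ⟨z₀, hz₀, hfz₀⟩ := hf0
  have hz₀ord : meromorphicOrderAt f z₀ ≠ ⊤ := by
    simp [(hU z₀ hz₀).meromorphicOrderAt_eq, analyticOrderAt_eq_zero.mpr (Or.inr hfz₀)]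
  have horder : ∀ u : ball (0 : ℂ) R, meromorphicOrderAt f u ≠ ⊤ := fun u =>
    hU.meromorphicOn.meromorphicOrderAt_ne_top_of_isPreconnected (convex_ball 0 R).isPreconnected
      hz₀ u.2 hz₀ord
  obtain ⟨g, hg, hg0, hfg⟩ := hU.meromorphicOn.extract_zeros_poles horder hfin
  set P : ℂ → ℂ := ∏ᶠ u, (· - u) ^ D u
  -- `hfg` holds only off a discrete set; both sides are analytic, so it holds everywhere.
  have hfPg : ∀ z ∈ ball (0 : ℂ) R, f z = P z * g z := by
    intro z hz
    have hPg : AnalyticAt ℂ (P • g) z :=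
      (Function.FactorizedRational.analyticAt (hD z)).smul (hg z hz)
    have hnhdsNE := (hU z hz).meromorphicAt
      |>.eventuallyEq_nhdsNE_of_eventuallyEq_codiscreteWithin_preperfect
        hPg.meromorphicAt hz isOpen_ball.preperfect hfg
    exact ((hU z hz).continuousAt.eventuallyEq_nhds_iff_eventuallyEq_nhdsNE
      hPg.continuousAt).mp hnhdsNE |>.eq_of_nhds
  refine ⟨hfin.toFinset, fun u => (D u).toNat, g, fun u hu => ?_, hg, fun z hz => hg0 ⟨z, hz⟩,
    fun z hz => ?_⟩
  · have hDu : D u ≠ 0 := by simpa only [Set.Finite.mem_toFinset, Function.mem_support] using hu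
    have hu : u ∈ ball (0 : ℂ) R := D.supportWithinDomain hDu
    refine ⟨hu, by_contra fun hfu => hDu ?_⟩
    simp [D, MeromorphicOn.AnalyticOnNhd.divisor_apply hU hu,
      analyticOrderAt_eq_zero.mpr (Or.inr hfu)]
  · rw [hfPg z hz, show P = _ from Function.FactorizedRational.finprod_eq_fun hfin]
    dsimp only
    rw [finprod_eq_prod_of_mulSupport_subset (s := hfin.toFinset)]
    · congr 1
      refine Finset.prod_congr rfl fun u _ => ?_
      rw [← zpow_natCast, Int.toNat_of_nonneg (hD u)]
    · intro u hu
      contrapose! hu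
      simp [show D u = 0 by simpa using hu]

theorem ne_zero_of_windingNumberIs_zero {f : ℂ → ℂ} {r R : ℝ}
    (hf : AnalyticOnNhd ℂ f (closedBall 0 R)) (hr : 0 < r) (hrR : r < R)
    (hzero : ∀ z ∈ ball (0 : ℂ) R, f z = 0 → ‖z‖ < r)
    (hW : WindingNumberIs (fun ζ => f (r * ζ)) 0) : ∀ z ∈ ball (0 : ℂ) R, f z ≠ 0 := by
  have hsphere : ∀ ζ ∈ sphere (0 : ℂ) 1, ‖(r : ℂ) * ζ‖ = r := fun ζ hζ => by
    simp [mem_sphere_zero_iff_norm.mp hζ, hr.le]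
  have hball : ∀ ζ ∈ sphere (0 : ℂ) 1, (r : ℂ) * ζ ∈ ball (0 : ℂ) R := fun ζ hζ =>
    mem_ball_zero_iff.mpr ((hsphere ζ hζ).trans_lt hrR)
  have hfr : ∀ ζ ∈ sphere (0 : ℂ) 1, f (r * ζ) ≠ 0 := fun ζ hζ h0 =>
    (hsphere ζ hζ ▸ hzero _ (hball ζ hζ) h0).false
  obtain ⟨S, n, g, hS, hg, hg0, hfac⟩ :=
    exists_eq_prod_sub_pow_mul hf ⟨r * 1, hball 1 (by simp), hfr 1 (by simp)⟩
  have hfactors : ∀ u ∈ S, WindingNumberIs (fun ζ => (r * ζ - u) ^ n u) (n u * 1) :=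
    fun u hu => (windingNumberIs_ofReal_mul_sub hr (hzero u (hS u hu).1 (hS u hu).2)).pow (n u)
  have hunit : WindingNumberIs (fun ζ => g (r * ζ)) 0 :=
    windingNumberIs_zero_of_ne_zero_on_ball hg.continuousOn hg0 ((abs_of_pos hr).trans_lt hrR)
  have hWfac := ((WindingNumberIs.finset_prod hfactors).mul hunit).congr
    fun ζ hζ => (hfac _ (hball ζ hζ)).symm
  have hn : ∀ u ∈ S, n u = 0 := by
    have := hWfac.unique hfr hW
    simp only [mul_one, add_zero] at this
    exact_mod_cast (Finset.sum_eq_zero_iff_of_nonneg fun u _ => Int.natCast_nonneg (n u)).mp this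
  intro z hz
  rw [hfac z hz, Finset.prod_eq_one fun u hu => by rw [hn u hu, pow_zero], one_mul]
  exact hg0 z hz

theorem exists_pos_forall_le_norm_of_annulus {f : ℂ → ℂ} {ρ : ℝ}
    (hf : ContinuousOn f (closedBall 0 ρ)) (hf0 : ∀ z ∈ closedBall (0 : ℂ) ρ, f z ≠ 0)
    {m : ℝ} (hm : 0 < m) (hfm : ∀ z ∈ annulus ρ, m ≤ ‖f z‖) :
    ∃ c > 0, ∀ z ∈ ball (0 : ℂ) 1, c ≤ ‖f z‖ := by
  rcases (closedBall (0 : ℂ) ρ).eq_empty_or_nonempty with hempty | hne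
  · exact ⟨m, hm, fun z hz => hfm z
      ⟨(closedBall_eq_empty.mp hempty).trans_le (norm_nonneg z), mem_ball_zero_iff.mp hz⟩⟩
  obtain ⟨w, hw, hmin⟩ := (isCompact_closedBall (0 : ℂ) ρ).exists_isMinOn hne hf.norm
  refine ⟨min m ‖f w‖, lt_min hm (norm_pos_iff.mpr (hf0 w hw)), fun z hz => ?_⟩
  rcases le_or_gt ‖z‖ ρ with hzρ | hρz
  · exact (min_le_right _ _).trans (hmin (mem_closedBall_zero_iff.mpr hzρ))
  · exact (min_le_left _ _).trans (hfm z ⟨hρz, mem_ball_zero_iff.mp hz⟩)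

theorem ne_zero_of_windingNumberIs_zero_of_annulus {f : ℂ → ℂ} {ρ r : ℝ}
    (hf : DifferentiableOn ℂ f (ball 0 1)) (hann : ∀ z ∈ annulus ρ, f z ≠ 0) (hρ : 0 ≤ ρ)
    (hr : r ∈ Set.Ioo ρ 1) (hW : WindingNumberIs (fun ζ => f (r * ζ)) 0) :
    ∀ z ∈ ball (0 : ℂ) 1, f z ≠ 0 := by
  obtain ⟨R, hrR, hR⟩ := exists_between hr.2
  intro z hz
  rcases lt_or_ge ‖z‖ R with hzR | hRz
  · refine ne_zero_of_windingNumberIs_zero ((hf.analyticOnNhd isOpen_ball).mono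
      (closedBall_subset_ball hR)) (hρ.trans_lt hr.1) hrR (fun w hw hfw => ?_) hW z
      (mem_ball_zero_iff.mpr hzR)
    by_contra! hrw
    exact hann w ⟨hr.1.trans_le hrw, (mem_ball_zero_iff.mp hw).trans hR⟩ hfw
  · exact hann z ⟨by linarith [hr.1], mem_ball_zero_iff.mp hz⟩

theorem nyquist_criterion_Hinfty_general (ρ : ℝ) (hρ : ρ ∈ Set.Ioo (0 : ℝ) 1)
    (f : ℂ → ℂ) (hf : DifferentiableOn ℂ f (Metric.ball 0 1))
    (hinv : ∃ m > (0 : ℝ), ∀ z ∈ annulus ρ, m ≤ ‖f z‖) :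
    (∃ g : ℂ → ℂ, DifferentiableOn ℂ g (Metric.ball 0 1) ∧
      (∃ M : ℝ, ∀ z ∈ Metric.ball (0 : ℂ) 1, ‖g z‖ ≤ M) ∧
      ∀ z ∈ Metric.ball (0 : ℂ) 1, f z * g z = 1) ↔
    (∀ r ∈ Set.Ioo ρ 1, WindingNumberIs (fun ζ => f ((r : ℂ) * ζ)) 0) := by
  obtain ⟨m, hm, hfm⟩ := hinv
  have hann : ∀ z ∈ annulus ρ, f z ≠ 0 := fun z hz => norm_pos_iff.mp (hm.trans_le (hfm z hz))
  constructor
  · rintro ⟨g, -, -, hfg⟩ r hr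
    exact windingNumberIs_zero_of_ne_zero_on_ball hf.continuousOn
      (fun z hz => left_ne_zero_of_mul_eq_one (hfg z hz))
      (abs_lt.mpr ⟨by linarith [hρ.1, hr.1], hr.2⟩)
  · intro hW
    obtain ⟨r, hr⟩ := Set.nonempty_Ioo.mpr hρ.2
    have hf0 := ne_zero_of_windingNumberIs_zero_of_annulus hf hann hρ.1.le hr (hW r hr)
    have hρ1 : closedBall (0 : ℂ) ρ ⊆ ball 0 1 := closedBall_subset_ball hρ.2
    obtain ⟨c, hc, hfc⟩ := exists_pos_forall_le_norm_of_annulus (hf.continuousOn.mono hρ1)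
      (fun z hz => hf0 z (hρ1 hz)) hm hfm
    refine ⟨fun z => (f z)⁻¹, hf.inv hf0, ⟨c⁻¹, fun z hz => ?_⟩,
      fun z hz => mul_inv_cancel₀ (hf0 z hz)⟩
    simpa only [norm_inv] using inv_anti₀ hc (hfc z hz)

/-- Nyquist criterion for `H^∞`: let `ρ ∈ (0,1)` and let `f` be bounded and holomorphic
on the unit disk whose restriction to the annulus `A_ρ` is invertible in `C_b(A_ρ)`
(i.e. `inf_{ρ<|z|<1} |f z| > 0`). Then `f` is invertible in `H^∞` if and only if for
every `r ∈ (ρ,1)` the loop `ζ ↦ f(rζ)` has winding number `0` about the origin. -/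
theorem nyquist_criterion_Hinfty (ρ : ℝ) (hρ : ρ ∈ Set.Ioo (0 : ℝ) 1)
    (f : ℂ → ℂ) (hf : DifferentiableOn ℂ f (Metric.ball 0 1))
    (hb : ∃ M : ℝ, ∀ z ∈ Metric.ball (0 : ℂ) 1, ‖f z‖ ≤ M)
    (hinv : ∃ m > (0 : ℝ), ∀ z ∈ annulus ρ, m ≤ ‖f z‖) :
    (∃ g : ℂ → ℂ, DifferentiableOn ℂ g (Metric.ball 0 1) ∧
      (∃ M : ℝ, ∀ z ∈ Metric.ball (0 : ℂ) 1, ‖g z‖ ≤ M) ∧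
      ∀ z ∈ Metric.ball (0 : ℂ) 1, f z * g z = 1) ↔
    (∀ r ∈ Set.Ioo ρ 1, WindingNumberIs (fun ζ => f ((r : ℂ) * ζ)) 0) :=
  nyquist_criterion_Hinfty_general ρ hρ f hf hinv
end

section
/- Let ρ ∈ (0,1), let p, m be positive integers, and let A be a p × m matrix whose entries are bounded holomorphic functions on the open unit disk 𝔻, regarded via restriction as a matrix over C_b(A_ρ). Then the Gelfand norm of A equals its H∞ norm: max_{φ ∈ 𝔐} ‖Â(φ)‖ = sup_{z ∈ 𝔻} ‖A(z)‖, where 𝔐 is the character space of C_b(A_ρ), Â(φ) = (φ(A_{ij}|_{A_ρ}))_{i,j}, and ‖·‖ denotes the operator norm from ℂ^m to ℂ^p with respect to the Euclidean norms. -/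
/-- The operator norm of a complex `p × m` matrix, viewed as a linear map
`ℂ^m → ℂ^p` with respect to the Euclidean norms. -/
noncomputable def matOpNorm {p m : ℕ} (M : Matrix (Fin p) (Fin m) ℂ) : ℝ :=
  ‖LinearMap.toContinuousLinearMap (Matrix.toEuclideanLin M)‖

open BoundedContinuousFunction WeakDual
open scoped InnerProductSpace

attribute [local instance] Matrix.normedAddCommGroup Matrix.normedSpace

noncomputable def matrixToEuclideanCLM (p m : ℕ) :
    Matrix (Fin p) (Fin m) ℂ →L[ℂ] (EuclideanSpace ℂ (Fin m) →L[ℂ] EuclideanSpace ℂ (Fin p)) :=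
  LinearMap.toContinuousLinearMap
    (LinearMap.toContinuousLinearMap.toLinearMap ∘ₗ Matrix.toEuclideanLin.toLinearMap)

theorem continuous_matOpNorm (p m : ℕ) : Continuous (matOpNorm (p := p) (m := m)) :=
  (matrixToEuclideanCLM p m).continuous.norm

theorem norm_toEuclideanLin_apply_le {p m : ℕ} (M : Matrix (Fin p) (Fin m) ℂ)
    (u : EuclideanSpace ℂ (Fin m)) : ‖Matrix.toEuclideanLin M u‖ ≤ matOpNorm M * ‖u‖ :=
  (LinearMap.toContinuousLinearMap (Matrix.toEuclideanLin M)).le_opNorm u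

theorem inner_toEuclideanLin_map {B G : Type*} [AddCommMonoid B] [Module ℂ B] [FunLike G B ℂ]
    [LinearMapClass G ℂ B ℂ] (L : G) {p m : ℕ} (F : Matrix (Fin p) (Fin m) B)
    (v : EuclideanSpace ℂ (Fin p)) (u : EuclideanSpace ℂ (Fin m)) :
    L (∑ i, ∑ j, (star (v i) * u j) • F i j) = ⟪v, Matrix.toEuclideanLin (F.map L) u⟫_ℂ := by
  simp only [map_sum, map_smul, smul_eq_mul, EuclideanSpace.inner_eq_star_dotProduct,
    dotProduct, Matrix.ofLp_toLpLin, Matrix.toLin'_apply, Matrix.mulVec, Matrix.map_apply,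
    Finset.sum_mul, Pi.star_apply]
  exact Finset.sum_congr rfl fun i _ => Finset.sum_congr rfl fun j _ => by ring

namespace BoundedContinuousFunction

variable {X : Type*} [TopologicalSpace X]

noncomputable def evalAlgHom (x : X) : (X →ᵇ ℂ) →ₐ[ℂ] ℂ where
  toFun f := f x
  map_one' := rfl
  map_mul' _ _ := rfl
  map_zero' := rfl
  map_add' _ _ := rfl
  commutes' _ := rfl

theorem matOpNorm_map_character_le [Nonempty X] (φ : characterSpace ℂ (X →ᵇ ℂ)) {p m : ℕ}
    (F : Matrix (Fin p) (Fin m) (X →ᵇ ℂ)) {C : ℝ}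
    (hC : ∀ x, matOpNorm (F.map fun f => f x) ≤ C) : matOpNorm (F.map φ) ≤ C := by
  have hC₀ : 0 ≤ C := (norm_nonneg _).trans (hC (Classical.arbitrary X))
  refine ContinuousLinearMap.opNorm_le_bound _ hC₀ fun u => ?_
  set v := Matrix.toEuclideanLin (F.map φ) u
  set f := ∑ i, ∑ j, (star (v i) * u j) • F i j
  have hf : ‖f‖ ≤ ‖v‖ * (C * ‖u‖) := by
    refine (norm_le (by positivity)).2 fun x => ?_
    rw [← evalCLM_apply ℂ, inner_toEuclideanLin_map]
    refine (norm_inner_le_norm _ _).trans (mul_le_mul_of_nonneg_left ?_ (norm_nonneg v))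
    exact (norm_toEuclideanLin_apply_le _ u).trans
      (mul_le_mul_of_nonneg_right (hC x) (norm_nonneg u))
  have hv : ‖v‖ ^ 2 ≤ ‖v‖ * (C * ‖u‖) :=
    calc ‖v‖ ^ 2 = ‖φ f‖ := by rw [inner_toEuclideanLin_map, inner_self_eq_norm_sq_to_K]; simp
      _ ≤ ‖f‖ := spectrum.norm_le_norm_of_mem (CharacterSpace.apply_mem_spectrum φ f)
      _ ≤ ‖v‖ * (C * ‖u‖) := hf
  show ‖v‖ ≤ C * ‖u‖
  nlinarith [norm_nonneg v, mul_nonneg hC₀ (norm_nonneg u)]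

theorem matOpNorm_map_eval_mem_range_character {p m : ℕ} (F : Matrix (Fin p) (Fin m) (X →ᵇ ℂ))
    (x : X) : matOpNorm (F.map fun f => f x) ∈
      Set.range fun φ : characterSpace ℂ (X →ᵇ ℂ) => matOpNorm (F.map φ) :=
  ⟨CharacterSpace.equivAlgHom.symm (evalAlgHom x), rfl⟩

theorem isCompact_range_matOpNorm_map_character {p m : ℕ}
    (F : Matrix (Fin p) (Fin m) (X →ᵇ ℂ)) :
    IsCompact (Set.range fun φ : characterSpace ℂ (X →ᵇ ℂ) => matOpNorm (F.map φ)) :=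
  isCompact_range <| (continuous_matOpNorm p m).comp <|
    continuous_matrix fun i j => (eval_continuous (F i j)).comp continuous_subtype_val

theorem bddAbove_range_matOpNorm_map_eval {p m : ℕ} (F : Matrix (Fin p) (Fin m) (X →ᵇ ℂ)) :
    BddAbove (Set.range fun x => matOpNorm (F.map fun f => f x)) :=
  (isCompact_range_matOpNorm_map_character F).bddAbove.mono
    (Set.range_subset_iff.2 (matOpNorm_map_eval_mem_range_character F))

theorem isGreatest_range_matOpNorm_map_character [Nonempty X] {p m : ℕ}
    (F : Matrix (Fin p) (Fin m) (X →ᵇ ℂ)) :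
    IsGreatest (Set.range fun φ : characterSpace ℂ (X →ᵇ ℂ) => matOpNorm (F.map φ))
      (⨆ x, matOpNorm (F.map fun f => f x)) := by
  obtain ⟨M, hM_mem, hM_ub⟩ := (isCompact_range_matOpNorm_map_character F).exists_isGreatest
    ⟨_, matOpNorm_map_eval_mem_range_character F (Classical.arbitrary X)⟩
  have hle : (⨆ x, matOpNorm (F.map fun f => f x)) ∈
      upperBounds (Set.range fun φ : characterSpace ℂ (X →ᵇ ℂ) => matOpNorm (F.map φ)) :=
    Set.forall_mem_range.2 fun φ =>
      matOpNorm_map_character_le φ F (le_ciSup (bddAbove_range_matOpNorm_map_eval F))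
  have hsup : (⨆ x, matOpNorm (F.map fun f => f x)) = M :=
    le_antisymm (ciSup_le fun x => hM_ub (matOpNorm_map_eval_mem_range_character F x))
      (hle hM_mem)
  exact ⟨hsup ▸ hM_mem, hle⟩

end BoundedContinuousFunction

theorem annulus_nonempty {ρ : ℝ} (hρ : ρ < 1) : (annulus ρ).Nonempty := by
  obtain ⟨r, hr, hr₁⟩ := exists_between (max_lt hρ one_pos)
  refine ⟨(r : ℂ), ?_, ?_⟩ <;>
    simp only [Complex.norm_real, Real.norm_eq_abs, abs_of_pos ((le_max_right ρ 0).trans_lt hr)]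
  exacts [(le_max_left ρ 0).trans_lt hr, hr₁]

theorem norm_le_of_forall_mem_annulus_norm_le {E : Type*} [NormedAddCommGroup E]
    [NormedSpace ℂ E] {ρ : ℝ} (hρ : ρ < 1) {f : ℂ → E}
    (hf : DifferentiableOn ℂ f (Metric.ball 0 1)) {C : ℝ} (hC : ∀ z ∈ annulus ρ, ‖f z‖ ≤ C)
    {w : ℂ} (hw : w ∈ Metric.ball 0 1) : ‖f w‖ ≤ C := by
  rw [mem_ball_zero_iff] at hw
  obtain ⟨r, hr, hr₁⟩ : ∃ r, max ρ ‖w‖ < r ∧ r < 1 := exists_between (max_lt hρ hw)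
  obtain ⟨hρr, hwr⟩ := max_lt_iff.1 hr
  have hr₀ : r ≠ 0 := ((norm_nonneg w).trans_lt hwr).ne'
  refine Complex.norm_le_of_forall_mem_frontier_norm_le Metric.isBounded_ball
    (hf.mono ?_).diffContOnCl (fun z hz => hC z ?_) (subset_closure (mem_ball_zero_iff.2 hwr))
  · rw [closure_ball 0 hr₀]
    exact Metric.closedBall_subset_ball hr₁
  · rw [frontier_ball 0 hr₀, mem_sphere_zero_iff_norm] at hz
    exact ⟨hz ▸ hρr, hz ▸ hr₁⟩

theorem iSup_ball_norm_eq_iSup_annulus_norm {E : Type*} [NormedAddCommGroup E]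
    [NormedSpace ℂ E] {ρ : ℝ} (hρ : ρ < 1) {f : ℂ → E}
    (hf : DifferentiableOn ℂ f (Metric.ball 0 1))
    (hbdd : BddAbove (Set.range fun x : annulus ρ => ‖f x‖)) :
    ⨆ z : Metric.ball (0 : ℂ) 1, ‖f z‖ = ⨆ x : annulus ρ, ‖f x‖ := by
  have hmax : ∀ z ∈ Metric.ball (0 : ℂ) 1, ‖f z‖ ≤ ⨆ x : annulus ρ, ‖f x‖ :=
    fun z => norm_le_of_forall_mem_annulus_norm_le hρ hf fun x hx => le_ciSup hbdd ⟨x, hx⟩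
  have := (annulus_nonempty hρ).to_subtype
  have : Nonempty (Metric.ball (0 : ℂ) 1) := ⟨⟨0, Metric.mem_ball_self one_pos⟩⟩
  refine le_antisymm (ciSup_le fun z => hmax z z.2) (ciSup_le fun x => ?_)
  exact le_ciSup (f := fun z : Metric.ball (0 : ℂ) 1 => ‖f z‖)
    ⟨_, Set.forall_mem_range.2 fun z => hmax z z.2⟩ ⟨x, mem_ball_zero_iff.2 x.2.2⟩

theorem gelfand_norm_eq_Hinfty_norm_general (ρ : ℝ) (hρ : ρ ∈ Set.Ioo (0 : ℝ) 1)
    (p m : ℕ)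
    (A : Matrix (Fin p) (Fin m) (ℂ → ℂ))
    (hA : ∀ i j, DifferentiableOn ℂ (A i j) (Metric.ball 0 1))
    (F : Matrix (Fin p) (Fin m) (BoundedContinuousFunction (annulus ρ) ℂ))
    (hF : ∀ i j, ∀ z : annulus ρ, F i j z = A i j (z : ℂ)) :
    IsGreatest
      (Set.range fun φ : WeakDual.characterSpace ℂ (BoundedContinuousFunction (annulus ρ) ℂ) =>
        matOpNorm (Matrix.of fun i j => φ (F i j)))
      (⨆ z : Metric.ball (0 : ℂ) 1, matOpNorm (Matrix.of fun i j => A i j (z : ℂ))) := by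
  have := (annulus_nonempty hρ.2).to_subtype
  set f : ℂ → EuclideanSpace ℂ (Fin m) →L[ℂ] EuclideanSpace ℂ (Fin p) :=
    fun z => matrixToEuclideanCLM p m (Matrix.of fun i j => A i j z)
  have hf : DifferentiableOn ℂ f (Metric.ball 0 1) :=
    (matrixToEuclideanCLM p m).differentiable.comp_differentiableOn <|
      differentiableOn_pi.2 fun i => differentiableOn_pi.2 (hA i)
  have hFf : ∀ x : annulus ρ, matOpNorm (F.map fun g => g x) = ‖f x‖ :=
    fun x => congrArg matOpNorm (Matrix.ext fun i j => hF i j x)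
  have hgelfand := isGreatest_range_matOpNorm_map_character F
  have hbdd := bddAbove_range_matOpNorm_map_eval F
  simp only [hFf] at hgelfand hbdd
  change IsGreatest _ (⨆ z : Metric.ball (0 : ℂ) 1, ‖f z‖)
  rwa [iSup_ball_norm_eq_iSup_annulus_norm hρ.2 hf hbdd]

/-- For a `p × m` matrix `A` with entries bounded holomorphic on the unit disk, regarded
via restriction as a matrix `F` over `C_b(A_ρ)`, the Gelfand norm of `F` equals the
`H^∞` norm of `A`: the maximum over the character space of `‖F̂(φ)‖` equals
`sup_{z ∈ 𝔻} ‖A(z)‖` (operator norms from `ℂ^m` to `ℂ^p`), and is attained. -/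
theorem gelfand_norm_eq_Hinfty_norm (ρ : ℝ) (hρ : ρ ∈ Set.Ioo (0 : ℝ) 1)
    (p m : ℕ) (hp : 0 < p) (hm : 0 < m)
    (A : Matrix (Fin p) (Fin m) (ℂ → ℂ))
    (hA : ∀ i j, DifferentiableOn ℂ (A i j) (Metric.ball 0 1))
    (hb : ∀ i j, ∃ M : ℝ, ∀ z ∈ Metric.ball (0 : ℂ) 1, ‖A i j z‖ ≤ M)
    (F : Matrix (Fin p) (Fin m) (BoundedContinuousFunction (annulus ρ) ℂ))
    (hF : ∀ i j, ∀ z : annulus ρ, F i j z = A i j (z : ℂ)) :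
    IsGreatest
      (Set.range fun φ : WeakDual.characterSpace ℂ (BoundedContinuousFunction (annulus ρ) ℂ) =>
        matOpNorm (Matrix.of fun i j => φ (F i j)))
      (⨆ z : Metric.ball (0 : ℂ) 1, matOpNorm (Matrix.of fun i j => A i j (z : ℂ))) :=
  gelfand_norm_eq_Hinfty_norm_general ρ hρ p m A hA F hF
end

section
/- Let T > 0 and a > 0. For δ ≥ 0 and s ∈ ℂ with Re(s) ≥ 0, define f_δ(s) = (|s|² e^{−2 Re(s) T} + (conj(s) − a)(s − a − δ)) / ((√2 conj(s) + a)(√2 s + a + δ)) (the denominator is nonzero for Re(s) ≥ 0). Then there exists δ₀ > 0 such that for every δ with 0 ≤ δ < δ₀ there exists m > 0 such that Re(f_δ(s)) > m for all s ∈ ℂ with Re(s) ≥ 0. -/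
/-!
Write `w = √2 s + a`, so `Re w ≥ a`, and `P = |s|² e^{-2 Re(s) T} + |s - a|²`. The numerator is
`P - δ conj (s - a)` and the denominator is `conj w (w + δ)`, whence
`Re f_δ(s) ≥ (P (1 - δ / a) - δ |s - a|) / |w|²`. The weight `P` is coercive,
`P ≥ e^{-3aT} / 9 · (a + |s - a|)²`: near `a` the term `|s|² e^{-2 Re(s) T}` stays away from zero,
away from `a` the term `|s - a|²` dominates. This absorbs the perturbation `δ |s - a|` for small `δ`
and bounds `P / |w|²` below, as `|w| ≤ (√2 + 1) (a + |s - a|)`.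
-/

open Complex ComplexConjugate

lemma Complex.norm_le_norm_add_ofReal {w : ℂ} (hw : 0 ≤ w.re) {δ : ℝ} (hδ : 0 ≤ δ) :
    ‖w‖ ≤ ‖w + δ‖ := by
  rw [← sq_le_sq₀ (norm_nonneg _) (norm_nonneg _), Complex.sq_norm, Complex.sq_norm,
    normSq_apply, normSq_apply]
  simp only [add_re, ofReal_re, add_im, ofReal_im, add_zero]
  nlinarith

lemma Complex.one_sub_div_le_re_div_add_ofReal {w : ℂ} {a δ : ℝ} (ha : 0 < a) (hw : a ≤ w.re)
    (hδ : 0 ≤ δ) : 1 - δ / a ≤ (w / (w + δ)).re := by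
  have hpos : a ≤ ‖w + δ‖ := by
    calc a ≤ (w + δ).re := by simp; linarith
      _ ≤ ‖w + δ‖ := re_le_norm _
  have hne : w + δ ≠ 0 := by
    intro h; rw [h, norm_zero] at hpos; linarith
  have hsplit : w / (w + δ) = 1 - δ / (w + δ) := by field_simp; ring
  calc 1 - δ / a ≤ 1 - δ / ‖w + δ‖ := by gcongr
    _ = 1 - ‖(δ : ℂ) / (w + δ)‖ := by rw [norm_div, norm_real, Real.norm_of_nonneg hδ]
    _ ≤ 1 - ((δ : ℂ) / (w + δ)).re := by linarith [re_le_norm ((δ : ℂ) / (w + δ))]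
    _ = (w / (w + δ)).re := by rw [hsplit, sub_re, one_re]

lemma Complex.le_re_sub_div_conj_mul_add_ofReal {w z : ℂ} {P a δ : ℝ} (ha : 0 < a)
    (hw : a ≤ w.re) (hP : 0 ≤ P) (hδ : 0 ≤ δ) :
    (P - δ * (P / a + ‖z‖)) / ‖w‖ ^ 2 ≤ ((P - δ * z) / (conj w * (w + δ))).re := by
  have hw0 : w ≠ 0 := by rintro rfl; simp at hw; linarith
  have hwδ : w + δ ≠ 0 := by rintro h; have := congrArg re h; simp at this; linarith
  have hsplit : (P - δ * z) / (conj w * (w + δ)) =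
      ((P / ‖w‖ ^ 2 : ℝ) : ℂ) * (w / (w + δ)) - δ * z / (conj w * (w + δ)) := by
    have : conj w = (‖w‖ ^ 2 : ℝ) / w := by
      rw [eq_div_iff hw0, mul_comm, mul_conj, Complex.sq_norm]
    rw [this]
    push_cast
    field_simp
  have hfirst : P / ‖w‖ ^ 2 * (1 - δ / a) ≤ (((P / ‖w‖ ^ 2 : ℝ) : ℂ) * (w / (w + δ))).re := by
    rw [re_ofReal_mul]
    exact mul_le_mul_of_nonneg_left (one_sub_div_le_re_div_add_ofReal ha hw hδ) (by positivity)
  have hsecond : ((δ : ℂ) * z / (conj w * (w + δ))).re ≤ δ * ‖z‖ / ‖w‖ ^ 2 := by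
    calc ((δ : ℂ) * z / (conj w * (w + δ))).re ≤ ‖(δ : ℂ) * z / (conj w * (w + δ))‖ :=
          re_le_norm _
      _ = δ * ‖z‖ / (‖w‖ * ‖w + δ‖) := by
          rw [norm_div, norm_mul, norm_mul, norm_conj, norm_real, Real.norm_of_nonneg hδ]
      _ ≤ δ * ‖z‖ / ‖w‖ ^ 2 := by
          rw [sq]
          gcongr
          exact norm_le_norm_add_ofReal (by linarith) hδ
  rw [hsplit, sub_re]
  calc (P - δ * (P / a + ‖z‖)) / ‖w‖ ^ 2 = P / ‖w‖ ^ 2 * (1 - δ / a) - δ * ‖z‖ / ‖w‖ ^ 2 := by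
        field_simp; ring
    _ ≤ _ := by linarith

lemma le_norm_sq_mul_exp_add_norm_sub_sq {a T : ℝ} (ha : 0 ≤ a) (hT : 0 ≤ T) (s : ℂ) :
    Real.exp (-3 * a * T) / 9 * (a + ‖s - a‖) ^ 2 ≤
      ‖s‖ ^ 2 * Real.exp (-2 * s.re * T) + ‖s - a‖ ^ 2 := by
  set u := ‖s - a‖
  have hexp : 0 < Real.exp (-2 * s.re * T) := Real.exp_pos _
  rcases le_or_gt (a / 2) u with hfar | hnear
  · have hexp_le : Real.exp (-3 * a * T) ≤ 1 := Real.exp_le_one_iff.mpr (by nlinarith)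
    calc Real.exp (-3 * a * T) / 9 * (a + u) ^ 2 ≤ 1 / 9 * (3 * u) ^ 2 := by
          gcongr; linarith
      _ ≤ ‖s‖ ^ 2 * Real.exp (-2 * s.re * T) + u ^ 2 := by nlinarith [sq_nonneg ‖s‖]
  · have hs_norm : a / 2 ≤ ‖s‖ := by
      have := norm_sub_le s (s - a)
      rw [sub_sub_cancel, norm_real, Real.norm_of_nonneg ha] at this
      linarith
    have hs_re : s.re ≤ 3 * a / 2 := by
      have := re_le_norm (s - a)
      rw [sub_re, ofReal_re] at this
      linarith
    have hexp_le : Real.exp (-3 * a * T) ≤ Real.exp (-2 * s.re * T) :=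
      Real.exp_le_exp.mpr (by nlinarith)
    calc Real.exp (-3 * a * T) / 9 * (a + u) ^ 2 ≤ Real.exp (-3 * a * T) / 9 * (3 * ‖s‖) ^ 2 := by
          gcongr; linarith
      _ ≤ ‖s‖ ^ 2 * Real.exp (-2 * s.re * T) := by nlinarith [sq_nonneg ‖s‖]
      _ ≤ ‖s‖ ^ 2 * Real.exp (-2 * s.re * T) + u ^ 2 := le_add_of_nonneg_right (sq_nonneg u)

lemma Complex.norm_mul_add_ofReal_le {c a : ℝ} (hc : 0 ≤ c) (ha : 0 ≤ a) (s : ℂ) :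
    ‖c * s + a‖ ≤ (c + 1) * (a + ‖s - a‖) := by
  have : (c : ℂ) * s + a = c * (s - a) + ((c + 1 : ℝ) : ℂ) * a := by push_cast; ring
  calc ‖(c : ℂ) * s + a‖ ≤ c * ‖s - a‖ + (c + 1) * a := by
        rw [this]
        refine (norm_add_le _ _).trans_eq ?_
        rw [norm_mul, norm_mul, norm_real, norm_real, norm_real, Real.norm_of_nonneg hc,
          Real.norm_of_nonneg ha, Real.norm_of_nonneg (by linarith)]
    _ ≤ (c + 1) * (a + ‖s - a‖) := by nlinarith [norm_nonneg (s - a)]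

lemma div_le_sub_mul_div_sq {P u W l a δ C : ℝ} (ha : 0 < a) (hl : 0 < l) (hl4 : l ≤ 1 / 4)
    (hδl : δ ≤ a * l) (hu : 0 ≤ u) (hP : l * (a + u) ^ 2 ≤ P) (hW : 0 < W)
    (hWC : W ≤ C * (a + u)) :
    l / (2 * C ^ 2) ≤ (P - δ * (P / a + u)) / W ^ 2 := by
  have hP0 : 0 < P := lt_of_lt_of_le (by positivity) hP
  have hC : 0 < C := pos_of_mul_pos_left (hW.trans_le hWC) (by positivity)
  have hPa : P / a ≤ P / (4 * a * l) := by
    gcongr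
    nlinarith
  have hPu : u ≤ P / (4 * a * l) := by
    rw [le_div_iff₀ (by positivity)]
    nlinarith [sq_nonneg (a - u)]
  have hδP : δ * (P / a + u) ≤ P / 2 := by
    calc δ * (P / a + u) ≤ a * l * (P / (4 * a * l) + P / (4 * a * l)) := by gcongr
      _ = P / 2 := by field_simp; ring
  have hW2 : W ^ 2 ≤ C ^ 2 * P / l := by
    rw [le_div_iff₀ hl]
    calc W ^ 2 * l ≤ (C * (a + u)) ^ 2 * l := by gcongr
      _ ≤ C ^ 2 * P := by nlinarith
  calc l / (2 * C ^ 2) = (P / 2) / (C ^ 2 * P / l) := by field_simp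
    _ ≤ (P / 2) / W ^ 2 := by gcongr
    _ ≤ (P - δ * (P / a + u)) / W ^ 2 := by gcongr; linarith

/-- Let `T, a > 0`. For `δ ≥ 0` and `Re s ≥ 0`, set
`f_δ(s) = (|s|² e^{−2 Re(s) T} + (conj s − a)(s − a − δ)) /
          ((√2 conj s + a)(√2 s + a + δ))`.
Then there is `δ₀ > 0` such that for every `0 ≤ δ < δ₀` there is `m > 0` with
`Re (f_δ(s)) > m` for all `s` in the closed right half plane. -/
theorem re_bounded_below_uncertain_pole (T a : ℝ) (hT : 0 < T) (ha : 0 < a) :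
    ∃ δ₀ > (0 : ℝ), ∀ δ : ℝ, 0 ≤ δ → δ < δ₀ →
      ∃ m > (0 : ℝ), ∀ s : ℂ, 0 ≤ s.re →
        m < ((((‖s‖ : ℝ) : ℂ) ^ 2 * Real.exp (-2 * s.re * T) +
              (starRingEnd ℂ s - (a : ℂ)) * (s - (a : ℂ) - (δ : ℂ))) /
             (((Real.sqrt 2 : ℂ) * starRingEnd ℂ s + (a : ℂ)) *
              ((Real.sqrt 2 : ℂ) * s + (a : ℂ) + (δ : ℂ)))).re := by
  set l := Real.exp (-3 * a * T) / 9 with hl_def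
  have hl : 0 < l := by positivity
  have hl4 : l ≤ 1 / 4 := by
    have : Real.exp (-3 * a * T) ≤ 1 := Real.exp_le_one_iff.mpr (by nlinarith)
    rw [hl_def]; linarith
  refine ⟨a * l, by positivity, fun δ hδ hδ₀ =>
    ⟨l / (4 * (√2 + 1) ^ 2), by positivity, fun s hs => ?_⟩⟩
  set w : ℂ := √2 * s + a
  have hw : a ≤ w.re := by simp [w]; positivity
  have hnum : ((‖s‖ : ℝ) : ℂ) ^ 2 * Real.exp (-2 * s.re * T) + (conj s - a) * (s - a - δ) =
      ((‖s‖ ^ 2 * Real.exp (-2 * s.re * T) + ‖s - a‖ ^ 2 : ℝ) : ℂ) - δ * conj (s - a) := by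
    have hsa : (conj s - a) * (s - a) = ((‖s - a‖ ^ 2 : ℝ) : ℂ) := by
      rw [ofReal_pow, ← mul_conj', mul_comm, map_sub, conj_ofReal]
    rw [map_sub, conj_ofReal]
    push_cast at hsa ⊢
    linear_combination hsa
  have hden : ((√2 : ℂ) * conj s + a) * (√2 * s + a + δ) = conj w * (w + δ) := by
    simp [w]
  rw [hnum, hden]
  refine lt_of_lt_of_le ?_ (le_re_sub_div_conj_mul_add_ofReal ha hw (by positivity) hδ)
  rw [norm_conj]
  refine lt_of_lt_of_le
    (div_lt_div_of_pos_left hl (by positivity) (by nlinarith [Real.sqrt_nonneg 2]))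
    (div_le_sub_mul_div_sq ha hl hl4 hδ₀.le (norm_nonneg _)
      (le_norm_sq_mul_exp_add_norm_sub_sq ha.le hT.le s) (ha.trans_le (hw.trans (re_le_norm w)))
      (norm_mul_add_ofReal_le (Real.sqrt_nonneg 2) ha.le s))
end

section
/- For all real numbers a₁ > 0 and a₂ > 0, the supremum over ω ≥ 0 of ω / (√(ω² + a₁²/2) · √(ω² + a₂²/2)) equals √2 / (a₁ + a₂), and this supremum is attained. -/
/-- For `a₁, a₂ > 0`, the supremum over `ω ≥ 0` of
`ω / (√(ω² + a₁²/2) · √(ω² + a₂²/2))` equals `√2 / (a₁ + a₂)`, and it is attained. -/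
theorem sup_uncertain_pole_formula (a₁ a₂ : ℝ) (h₁ : 0 < a₁) (h₂ : 0 < a₂) :
    IsGreatest
      ((fun ω : ℝ =>
          ω / (Real.sqrt (ω ^ 2 + a₁ ^ 2 / 2) * Real.sqrt (ω ^ 2 + a₂ ^ 2 / 2))) ''
        Set.Ici 0)
      (Real.sqrt 2 / (a₁ + a₂)) := by
  have ha : 0 < a₁ + a₂ := by linarith
  have h2 : (Real.sqrt 2) ^ 2 = 2 := Real.sq_sqrt (by norm_num)
  have h2pos : 0 < Real.sqrt 2 := Real.sqrt_pos.mpr (by norm_num)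
  constructor
  · refine ⟨Real.sqrt (a₁ * a₂ / 2), Set.mem_Ici.mpr (Real.sqrt_nonneg _), ?_⟩
    simp only
    set ω := Real.sqrt (a₁ * a₂ / 2) with hωdef
    have hω0 : 0 ≤ ω := Real.sqrt_nonneg _
    have hω : ω ^ 2 = a₁ * a₂ / 2 := Real.sq_sqrt (by positivity)
    set s₁ := Real.sqrt (ω ^ 2 + a₁ ^ 2 / 2) with hs₁def
    set s₂ := Real.sqrt (ω ^ 2 + a₂ ^ 2 / 2) with hs₂def
    have hs₁ : s₁ ^ 2 = ω ^ 2 + a₁ ^ 2 / 2 := Real.sq_sqrt (by positivity)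
    have hs₂ : s₂ ^ 2 = ω ^ 2 + a₂ ^ 2 / 2 := Real.sq_sqrt (by positivity)
    have hs₁p : 0 < s₁ := Real.sqrt_pos.mpr (by positivity)
    have hs₂p : 0 < s₂ := Real.sqrt_pos.mpr (by positivity)
    rw [div_eq_div_iff (by positivity) (by positivity)]
    have hsq : (ω * (a₁ + a₂)) ^ 2 = (Real.sqrt 2 * (s₁ * s₂)) ^ 2 := by
      rw [mul_pow, mul_pow, mul_pow, h2, hs₁, hs₂, hω]; ring
    exact le_antisymm
      ((pow_le_pow_iff_left₀ (by positivity) (by positivity) (by norm_num)).mp hsq.le)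
      ((pow_le_pow_iff_left₀ (by positivity) (by positivity) (by norm_num)).mp hsq.ge)
  · rintro x ⟨ω, hω, rfl⟩
    simp only
    have hω0 : (0:ℝ) ≤ ω := hω
    set s₁ := Real.sqrt (ω ^ 2 + a₁ ^ 2 / 2) with hs₁def
    set s₂ := Real.sqrt (ω ^ 2 + a₂ ^ 2 / 2) with hs₂def
    have hs₁ : s₁ ^ 2 = ω ^ 2 + a₁ ^ 2 / 2 := Real.sq_sqrt (by positivity)
    have hs₂ : s₂ ^ 2 = ω ^ 2 + a₂ ^ 2 / 2 := Real.sq_sqrt (by positivity)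
    have hs₁p : 0 < s₁ := Real.sqrt_pos.mpr (by positivity)
    have hs₂p : 0 < s₂ := Real.sqrt_pos.mpr (by positivity)
    rw [div_le_div_iff₀ (by positivity) (by positivity)]
    have key : (ω * (a₁ + a₂)) ^ 2 ≤ (Real.sqrt 2 * (s₁ * s₂)) ^ 2 := by
      rw [mul_pow, mul_pow, mul_pow, h2, hs₁, hs₂]
      nlinarith [sq_nonneg (ω ^ 2 - a₁ * a₂ / 2)]
    exact (pow_le_pow_iff_left₀ (by positivity) (by positivity) (by norm_num)).mp key
end
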